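/- Let σ > 3, c > 39/4, and η ∈ (0, 1/c). Let v = (v₁, v₂) ∈ ℝ² with v₂ ≠ 0 and |v₁| ≤ (3/(2√(cη)))|v₂| (v lies in the cone of width 3/(2√(cη))). Let n ≥ 1 satisfy σ^{n/2} ≥ 1/√(3η). Then for 0 < λ < 1, ‖(λ^n v₁, σ^n v₂)‖ ≥ σ^{n/2} ‖v‖, where ‖·‖ is the Euclidean norm on ℝ². -/
import Mathlib


theorem stmt_8 (σ lam c η v₁ v₂ : ℝ) (n : ℕ)
    (hσ : σ > 3) (hlam0 : 0 < lam) (hlam : lam < 1)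
    (hc : c > 39/4) (hη0 : 0 < η) (hη : η < 1/c)
    (hv₂ : v₂ ≠ 0) (hcone : |v₁| ≤ (3 / (2 * Real.sqrt (c * η))) * |v₂|)
    (hn : 1 ≤ n) (hσn : σ ^ ((n : ℝ)/2) ≥ 1 / Real.sqrt (3 * η)) :
    Real.sqrt ((lam ^ n * v₁) ^ 2 + (σ ^ n * v₂) ^ 2) ≥
      σ ^ ((n : ℝ)/2) * Real.sqrt (v₁ ^ 2 + v₂ ^ 2) := by
  have hσ0 : (0:ℝ) < σ := by linarith
  have hc0 : (0:ℝ) < c := by linarith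
  have hcη : 0 < c * η := mul_pos hc0 hη0
  have hcη1 : c * η < 1 := by
    have := (lt_div_iff₀ hc0).mp hη
    nlinarith
  set S := σ ^ ((n:ℝ)/2) with hS
  have hS0 : 0 < S := Real.rpow_pos_of_pos hσ0 _
  have hS2 : S ^ 2 = σ ^ n := by
    rw [hS, ← Real.rpow_natCast σ n, ← Real.rpow_natCast S 2, hS,
      ← Real.rpow_mul hσ0.le]
    norm_num
  have h3η : (0:ℝ) < 3 * η := by linarith
  have hsq3η : (0:ℝ) < Real.sqrt (3*η) := Real.sqrt_pos.mpr h3η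
  -- σ^n ≥ 1/(3η)
  have hσn' : σ ^ n ≥ 1 / (3 * η) := by
    have h1 : (1 / Real.sqrt (3*η))^2 = 1/(3*η) := by
      rw [div_pow, one_pow, Real.sq_sqrt h3η.le]
    calc σ ^ n = S ^ 2 := hS2.symm
      _ ≥ (1 / Real.sqrt (3*η))^2 := by
          apply pow_le_pow_left₀ (by positivity) hσn
      _ = 1/(3*η) := h1
  -- cone bound: v₁² ≤ 9/(4cη) v₂²
  have hsqcη : Real.sqrt (c*η) ^ 2 = c*η := Real.sq_sqrt hcη.le
  have hsqcη0 : (0:ℝ) < Real.sqrt (c*η) := Real.sqrt_pos.mpr hcη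
  have hv1sq : v₁ ^ 2 ≤ 9 / (4 * (c*η)) * v₂ ^ 2 := by
    have h := mul_le_mul hcone hcone (abs_nonneg v₁) (by positivity)
    have hv1 : |v₁| * |v₁| = v₁ ^ 2 := by rw [← abs_mul, abs_mul_self]; ring
    have hv2 : |v₂| * |v₂| = v₂ ^ 2 := by rw [← abs_mul, abs_mul_self]; ring
    rw [hv1] at h
    calc v₁ ^ 2 ≤ 3 / (2 * Real.sqrt (c * η)) * |v₂| * (3 / (2 * Real.sqrt (c * η)) * |v₂|) := h
      _ = 9 / (4 * (Real.sqrt (c*η))^2) * v₂ ^ 2 := by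
          field_simp
          nlinarith [hv2]
      _ = 9 / (4 * (c*η)) * v₂ ^ 2 := by rw [hsqcη]
  -- key: (σ^n - 1) v₂² ≥ v₁²
  have hkey : σ ^ n * v₂ ^ 2 ≥ v₁ ^ 2 + v₂ ^ 2 := by
    have hnum : 0 ≤ 4*c - 12*(c*η) - 27 := by
      linarith [hcη1, hc]
    have e : 1/(3*η) - 1 - 9/(4*(c*η)) = (4*c - 12*(c*η) - 27)/(12*(c*η)) := by
      field_simp; ring
    have harith : 1 / (3 * η) - 1 ≥ 9 / (4 * (c*η)) := by
      have := div_nonneg hnum (by positivity : (0:ℝ) ≤ 12*(c*η))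
      linarith [e ▸ this]
    have hv2pos : 0 < v₂ ^ 2 := by positivity
    have t1 : v₁ ^ 2 ≤ (1/(3*η) - 1) * v₂ ^ 2 :=
      hv1sq.trans (mul_le_mul_of_nonneg_right harith hv2pos.le)
    have t2 : (1/(3*η) - 1) * v₂ ^ 2 ≤ (σ ^ n - 1) * v₂ ^ 2 :=
      mul_le_mul_of_nonneg_right (by linarith [hσn']) hv2pos.le
    have t3 : (σ ^ n - 1) * v₂ ^ 2 = σ ^ n * v₂ ^ 2 - v₂ ^ 2 := by ring
    linarith
  -- finish
  have hσnpos : (0:ℝ) < σ ^ n := by positivity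
  have hrhs : S * Real.sqrt (v₁ ^ 2 + v₂ ^ 2) = Real.sqrt (σ ^ n * (v₁ ^ 2 + v₂ ^ 2)) := by
    rw [Real.sqrt_mul hσnpos.le, ← hS2, Real.sqrt_sq hS0.le]
  rw [ge_iff_le, hrhs]
  apply Real.sqrt_le_sqrt
  have h2 : (σ ^ n * v₂) ^ 2 = σ ^ n * (σ ^ n * v₂ ^ 2) := by ring
  have h3 : σ ^ n * (v₁ ^ 2 + v₂ ^ 2) ≤ σ ^ n * (σ ^ n * v₂ ^ 2) :=
    mul_le_mul_of_nonneg_left hkey hσnpos.le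
  linarith [sq_nonneg (lam ^ n * v₁)]
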